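/- Let G be the group presented by ⟨a, s, t | a² = 1, [a, t⁻¹at] = 1, [s,t] = 1, s⁻¹as = a·(t⁻¹at)⟩. Then for every integer i < 0 and every integer j, the elements s⁻ⁱ a sⁱ and t⁻ʲ a tʲ commute in G; that is, [a^{sⁱ}, a^{tʲ}] = 1 in G for all i < 0 and all j ∈ ℤ. -/
import Mathlib


/-- The three generators `a`, `s`, `t`. -/
inductive Gen : Type
  | a | s | t

/-- The relators of the presentation
`⟨a, s, t | a² = 1, [a, t⁻¹at] = 1, [s,t] = 1, s⁻¹as = a·(t⁻¹at)⟩`,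
where `[x,y] = x⁻¹y⁻¹xy`. -/
def rels : Set (FreeGroup Gen) :=
  { (FreeGroup.of Gen.a) ^ 2,
    (FreeGroup.of Gen.a)⁻¹ *
        ((FreeGroup.of Gen.t)⁻¹ * FreeGroup.of Gen.a * FreeGroup.of Gen.t)⁻¹ *
        FreeGroup.of Gen.a *
        ((FreeGroup.of Gen.t)⁻¹ * FreeGroup.of Gen.a * FreeGroup.of Gen.t),
    (FreeGroup.of Gen.s)⁻¹ * (FreeGroup.of Gen.t)⁻¹ * FreeGroup.of Gen.s * FreeGroup.of Gen.t,
    ((FreeGroup.of Gen.s)⁻¹ * FreeGroup.of Gen.a * FreeGroup.of Gen.s)⁻¹ *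
        (FreeGroup.of Gen.a *
          ((FreeGroup.of Gen.t)⁻¹ * FreeGroup.of Gen.a * FreeGroup.of Gen.t)) }

/-- The group `G` of the paper. -/
abbrev G := PresentedGroup rels

def a : G := PresentedGroup.of Gen.a
def s : G := PresentedGroup.of Gen.s
def t : G := PresentedGroup.of Gen.t

/- ### Auxiliary development -/

lemma rel_eq_one {r : FreeGroup Gen} (hr : r ∈ rels) :
    (PresentedGroup.mk rels r : G) = 1 :=
  (QuotientGroup.eq_one_iff r).2 (Subgroup.subset_normalClosure hr)

lemma mk_a : (PresentedGroup.mk rels (FreeGroup.of Gen.a) : G) = a := rfl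
lemma mk_s : (PresentedGroup.mk rels (FreeGroup.of Gen.s) : G) = s := rfl
lemma mk_t : (PresentedGroup.mk rels (FreeGroup.of Gen.t) : G) = t := rfl

lemma rel_a : a * a = 1 := by
  have h := rel_eq_one (show (FreeGroup.of Gen.a) ^ 2 ∈ rels by simp [rels])
  simp only [map_pow, mk_a, sq] at h
  exact h

lemma rel_comm : a * (t⁻¹ * a * t) = (t⁻¹ * a * t) * a := by
  have h := rel_eq_one (show
      (FreeGroup.of Gen.a)⁻¹ *
        ((FreeGroup.of Gen.t)⁻¹ * FreeGroup.of Gen.a * FreeGroup.of Gen.t)⁻¹ *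
        FreeGroup.of Gen.a *
        ((FreeGroup.of Gen.t)⁻¹ * FreeGroup.of Gen.a * FreeGroup.of Gen.t) ∈ rels by
    simp [rels])
  simp only [map_mul, map_inv, mk_a, mk_t] at h
  have h2 := congrArg (fun z => (t⁻¹ * a * t) * a * z) h
  simpa [mul_assoc] using h2

lemma rel_st : s * t = t * s := by
  have h := rel_eq_one (show
      (FreeGroup.of Gen.s)⁻¹ * (FreeGroup.of Gen.t)⁻¹ * FreeGroup.of Gen.s *
        FreeGroup.of Gen.t ∈ rels by simp [rels])
  simp only [map_mul, map_inv, mk_s, mk_t] at h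
  have h2 := congrArg (fun z => t * s * z) h
  simpa [mul_assoc] using h2

lemma rel_sas : s⁻¹ * a * s = a * (t⁻¹ * a * t) := by
  have h := rel_eq_one (show
      ((FreeGroup.of Gen.s)⁻¹ * FreeGroup.of Gen.a * FreeGroup.of Gen.s)⁻¹ *
        (FreeGroup.of Gen.a *
          ((FreeGroup.of Gen.t)⁻¹ * FreeGroup.of Gen.a * FreeGroup.of Gen.t)) ∈ rels by
    simp [rels])
  simp only [map_mul, map_inv, mk_a, mk_s, mk_t] at h
  have h2 := congrArg (fun z => (s⁻¹ * a * s) * z) h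
  have h3 : a * (t⁻¹ * a * t) = s⁻¹ * a * s := by simpa [mul_assoc] using h2
  exact h3.symm

/-- `b j = t⁻ʲ a tʲ`. -/
def b (j : ℤ) : G := (t ^ j)⁻¹ * a * t ^ j

lemma comm_st : Commute s t := rel_st

lemma b_succ (j : ℤ) : b (j + 1) = (t ^ j)⁻¹ * (t⁻¹ * a * t) * t ^ j := by
  simp only [b, zpow_add, zpow_one]
  group

lemma comm_b_adj (j : ℤ) : Commute (b j) (b (j + 1)) := by
  have h : Commute a (t⁻¹ * a * t) := rel_comm
  have h2 := h.map (MulAut.conj ((t : G) ^ j)⁻¹)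
  simp only [MulAut.conj_apply, inv_inv] at h2
  rw [b_succ]
  show Commute ((t ^ j)⁻¹ * a * t ^ j) _
  convert h2 using 2 <;> simp [mul_assoc]

lemma conj_s_b (j : ℤ) : s⁻¹ * b j * s = b j * b (j + 1) := by
  have hst : ∀ k : ℤ, s * t ^ k = t ^ k * s := fun k => (comm_st.zpow_right k).eq
  have h1 : s⁻¹ * (t ^ j)⁻¹ = (t ^ j)⁻¹ * s⁻¹ := by
    have := congrArg (fun z => z⁻¹) (hst j)
    simpa [mul_inv_rev] using this.symm
  calc s⁻¹ * b j * s = s⁻¹ * ((t ^ j)⁻¹ * a * t ^ j) * s := rfl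
    _ = (s⁻¹ * (t ^ j)⁻¹) * a * (t ^ j * s) := by simp [mul_assoc]
    _ = ((t ^ j)⁻¹ * s⁻¹) * a * (s * t ^ j) := by rw [h1, hst]
    _ = (t ^ j)⁻¹ * (s⁻¹ * a * s) * t ^ j := by simp [mul_assoc]
    _ = (t ^ j)⁻¹ * (a * (t⁻¹ * a * t)) * t ^ j := by rw [rel_sas]
    _ = ((t ^ j)⁻¹ * a * t ^ j) * ((t ^ j)⁻¹ * (t⁻¹ * a * t) * t ^ j) := by
        simp [mul_assoc]
    _ = b j * b (j + 1) := by rw [b_succ]; rfl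

lemma comm_b_prod (j m : ℤ) :
    Commute (b j) (b m) → Commute (b j * b (j + 1)) (b m * b (m + 1)) := by
  intro h
  have h2 := h.map (MulAut.conj (s : G)⁻¹)
  simp only [MulAut.conj_apply, inv_inv] at h2
  have e : ∀ k : ℤ, s⁻¹ * b k * s = b k * b (k + 1) := conj_s_b
  rw [← e j, ← e m]
  convert h2 using 2 <;> simp [mul_assoc]

/-- Key cancellation step. -/
lemma cancel_step {p q r u : G} (e1 : (p * q) * (r * u) = (r * u) * (p * q))
    (hpr : p * r = r * p) (hqr : q * r = r * q) (hqu : q * u = u * q) :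
    p * u = u * p := by
  have hmid : q * (r * u) = r * (u * q) := by
    rw [← mul_assoc, hqr, mul_assoc, hqu]
  have key : r * (p * (u * q)) = r * (u * (p * q)) := by
    calc r * (p * (u * q)) = (r * p) * (u * q) := by rw [mul_assoc]
      _ = (p * r) * (u * q) := by rw [hpr]
      _ = p * (r * (u * q)) := by rw [mul_assoc]
      _ = p * (q * (r * u)) := by rw [hmid]
      _ = (p * q) * (r * u) := by rw [mul_assoc]
      _ = (r * u) * (p * q) := e1
      _ = r * (u * (p * q)) := by rw [mul_assoc]
  have h4 := mul_left_cancel key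
  rw [← mul_assoc, ← mul_assoc] at h4
  exact mul_right_cancel h4

lemma comm_b_nat (m : ℕ) : ∀ j : ℤ, Commute (b j) (b (j + m)) := by
  induction m using Nat.twoStepInduction with
  | zero => intro j; simpa using Commute.refl (b j)
  | one => intro j; simpa using comm_b_adj j
  | more m ih0 ih1 =>
    intro j
    have e1 := comm_b_prod j (j + ((m : ℤ) + 1)) (by
      have := ih1 j; push_cast at this; simpa [add_assoc] using this)
    have hpr : b j * b (j + ((m : ℤ) + 1)) = b (j + ((m : ℤ) + 1)) * b j := by
      have := (ih1 j).eq; push_cast at this; simpa [add_assoc] using this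
    have hqr : b (j + 1) * b (j + ((m : ℤ) + 1)) = b (j + ((m : ℤ) + 1)) * b (j + 1) := by
      have := (ih0 (j + 1)).eq
      have e : j + 1 + (m : ℤ) = j + ((m : ℤ) + 1) := by ring
      rwa [e] at this
    have hqu : b (j + 1) * b (j + ((m : ℤ) + 1) + 1) = b (j + ((m : ℤ) + 1) + 1) * b (j + 1) := by
      have := (ih1 (j + 1)).eq
      push_cast at this
      have e : j + 1 + ((m : ℤ) + 1) = j + ((m : ℤ) + 1) + 1 := by ring
      rwa [e] at this
    have goal : b j * b (j + ((m : ℤ) + 1) + 1) = b (j + ((m : ℤ) + 1) + 1) * b j :=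
      cancel_step e1.eq hpr hqr hqu
    have e : j + ((m : ℤ) + 1) + 1 = j + ((m + 2 : ℕ) : ℤ) := by push_cast; ring
    rw [e] at goal
    exact goal

lemma comm_b (j k : ℤ) : Commute (b j) (b k) := by
  rcases le_total j k with h | h
  · have hh := comm_b_nat (k - j).toNat j
    have e : j + (k - j) = k := by ring
    rwa [Int.toNat_of_nonneg (by omega), e] at hh
  · have hh := comm_b_nat (j - k).toNat k
    have e : k + (j - k) = j := by ring
    rw [Int.toNat_of_nonneg (by omega), e] at hh
    exact hh.symm

lemma a_eq_b0 : a = b 0 := by simp [b]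

lemma comm_a_closure {x : G} (hx : x ∈ Subgroup.closure (Set.range b)) :
    Commute a x := by
  induction hx using Subgroup.closure_induction with
  | mem y hy =>
    obtain ⟨k, rfl⟩ := hy
    rw [a_eq_b0]; exact comm_b 0 k
  | one => exact Commute.one_right a
  | mul y z _ _ hy hz => exact hy.mul_right hz
  | inv y _ hy => exact hy.inv_right

lemma conj_pow_mem : ∀ n : ℕ, ∀ j : ℤ,
    ((s : G) ^ n)⁻¹ * b j * s ^ n ∈ Subgroup.closure (Set.range b)
  | 0, j => by simpa using Subgroup.subset_closure (Set.mem_range_self j)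
  | (n + 1), j => by
    have key : ((s : G) ^ (n + 1))⁻¹ * b j * s ^ (n + 1)
        = (((s : G) ^ n)⁻¹ * b j * s ^ n) * (((s : G) ^ n)⁻¹ * b (j + 1) * s ^ n) := by
      rw [pow_succ' (s : G) n]
      have : (s * (s : G) ^ n)⁻¹ * b j * (s * s ^ n)
          = ((s : G) ^ n)⁻¹ * (s⁻¹ * b j * s) * s ^ n := by
        simp [mul_inv_rev, mul_assoc]
      rw [this, conj_s_b]
      simp [mul_assoc]
    rw [key]
    exact Subgroup.mul_mem _ (conj_pow_mem n j) (conj_pow_mem n (j + 1))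

/-- In `G`, the conjugate `a^{sⁱ} = s⁻ⁱ a sⁱ` commutes with `a^{tʲ} = t⁻ʲ a tʲ` for every
integer `i < 0` and every integer `j`. -/
theorem conj_a_s_commute_conj_a_t (i : ℤ) (hi : i < 0) (j : ℤ) :
    Commute ((s ^ i)⁻¹ * a * s ^ i) ((t ^ j)⁻¹ * a * t ^ j) := by
  set n : ℕ := (-i).toNat with hn
  have hni : ((n : ℤ)) = -i := Int.toNat_of_nonneg (by omega)
  have hs : (s : G) ^ i = ((s : G) ^ n)⁻¹ := by
    rw [← zpow_natCast (s : G) n, hni, zpow_neg, inv_inv]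
  have h : Commute a (((s : G) ^ n)⁻¹ * b j * s ^ n) :=
    comm_a_closure (conj_pow_mem n j)
  have h2 := h.map (MulAut.conj ((s : G) ^ n))
  simp only [MulAut.conj_apply] at h2
  have e1 : (s : G) ^ n * (((s : G) ^ n)⁻¹ * b j * s ^ n) * ((s : G) ^ n)⁻¹ = b j := by
    simp [mul_assoc]
  rw [e1] at h2
  show Commute ((s ^ i)⁻¹ * a * s ^ i) (b j)
  rw [hs]
  simpa using h2
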